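/- arXiv:2201.06949 — 3 statements merged into one kernel-verified Lean document; each statement's English description precedes it below -/
import Mathlib

section
/- Let r > 0 and 0 < μ < 0.4, and suppose μ < 0.4r²/(0.04 + r²). Then the point Z₃ = (X*, Y*) with X* = 10·√(μ/(0.4−μ)) and Y* = (4r·√(0.4−μ) − 0.8·√μ) / ((0.4−μ)·√μ) satisfies X* > 0, Y* > 0, and F(X*, Y*) = (0,0); that is, Z₃ is a coexistence equilibrium of the system lying in the open first quadrant. -/
/-- Holling type III functional response. -/
noncomputable def f (X : ℝ) : ℝ := X ^ 2 / (X ^ 2 + 100)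

/-- The Rosenzweig–MacArthur vector field. -/
noncomputable def F (r μ : ℝ) (p : ℝ × ℝ) : ℝ × ℝ :=
  (r * p.1 - 0.02 * p.1 ^ 2 - p.2 * f p.1, (0.4 * f p.1 - μ) * p.2)

theorem coexistence_equilibrium (r μ : ℝ) (hr : r > 0) (hμ0 : 0 < μ) (hμ4 : μ < 0.4)
    (hcond : μ < 0.4 * r ^ 2 / (0.04 + r ^ 2)) :
    0 < 10 * Real.sqrt (μ / (0.4 - μ)) ∧
    0 < (4 * r * Real.sqrt (0.4 - μ) - 0.8 * Real.sqrt μ) / ((0.4 - μ) * Real.sqrt μ) ∧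
    F r μ (10 * Real.sqrt (μ / (0.4 - μ)),
      (4 * r * Real.sqrt (0.4 - μ) - 0.8 * Real.sqrt μ) / ((0.4 - μ) * Real.sqrt μ)) = (0, 0) := by
  have hb4 : (0:ℝ) < 0.4 - μ := by linarith
  set a := Real.sqrt μ with ha_def
  set b := Real.sqrt (0.4 - μ) with hb_def
  have ha : 0 < a := Real.sqrt_pos.2 hμ0
  have hb : 0 < b := Real.sqrt_pos.2 hb4
  have ha2 : a ^ 2 = μ := Real.sq_sqrt hμ0.le
  have hb2 : b ^ 2 = 0.4 - μ := Real.sq_sqrt hb4.le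
  have hsd : Real.sqrt (μ / (0.4 - μ)) = a / b := Real.sqrt_div hμ0.le _
  have hnum : 0 < 4 * r * b - 0.8 * a := by
    have hden : (0:ℝ) < 0.04 + r ^ 2 := by positivity
    have h1 : μ * (0.04 + r ^ 2) < 0.4 * r ^ 2 := by
      rw [div_eq_mul_inv] at hcond
      calc μ * (0.04 + r ^ 2) < (0.4 * r ^ 2 * (0.04 + r ^ 2)⁻¹) * (0.04 + r ^ 2) := by
            exact mul_lt_mul_of_pos_right hcond hden
        _ = 0.4 * r ^ 2 := by field_simp
    -- r^2 * b^2 > 0.04 * a^2, hence r*b > 0.2*a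
    have h2 : (0.2 * a) ^ 2 < (r * b) ^ 2 := by nlinarith [ha2, hb2]
    have h3 : 0.2 * a < r * b := by
      nlinarith [mul_pos hr hb, mul_pos (by norm_num : (0:ℝ) < 0.2) ha]
    linarith
  refine ⟨by rw [hsd]; positivity, ?_, ?_⟩
  · rw [hb2] at *
    positivity
  · have hsum : a ^ 2 + b ^ 2 = 0.4 := by rw [ha2, hb2]; ring
    simp only [F, f, hsd]
    have hX2 : (10 * (a / b)) ^ 2 = 100 * a ^ 2 / b ^ 2 := by field_simp; ring
    have hfX : (10 * (a / b)) ^ 2 / ((10 * (a / b)) ^ 2 + 100) = a ^ 2 / 0.4 := by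
      rw [hX2]
      rw [div_add' _ _ _ (by positivity : (b:ℝ)^2 ≠ 0)]
      have hne : (100 * a ^ 2 + 100 * b ^ 2) / b ^ 2 ≠ 0 := by positivity
      field_simp
      nlinarith [hsum]
    rw [hfX]
    simp only [Prod.mk.injEq]
    constructor
    · -- first component
      rw [← hb2]
      field_simp
      ring
    · -- second component
      rw [ha2]; ring
end

section
/- Let r > 0 and 0 < μ < 0.4, with μ < 0.4r²/(0.04 + r²), and let Z₃ = (X*, Y*) be the coexistence equilibrium with X* = 10·√(μ/(0.4−μ)) and Y* = (4r·√(0.4−μ) − 0.8·√μ)/((0.4−μ)·√μ). Then the Fréchet derivative of the Rosenzweig–MacArthur vector field F at Z₃ is represented by the matrix !![r − 0.4·√(μ/(0.4−μ)) − 5r(0.4−μ) + √(μ(0.4−μ)), −μ/0.4; 2r(0.4−μ) − 0.4·√(μ(0.4−μ)), 0]. -/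
open ContinuousLinearMap Real

lemma hasDerivAt_f (x : ℝ) : HasDerivAt f (200 * x / (x ^ 2 + 100) ^ 2) x := by
  have hsq : HasDerivAt (fun x : ℝ => x ^ 2) (2 * x) x := by simpa using hasDerivAt_pow 2 x
  exact (hsq.div (hsq.add_const 100) (by positivity)).congr_deriv (by ring)

noncomputable def jacobianF (r μ : ℝ) (Z : ℝ × ℝ) : ℝ × ℝ →L[ℝ] ℝ × ℝ :=
  ((r - 0.04 * Z.1 - Z.2 * deriv f Z.1) • fst ℝ ℝ ℝ - f Z.1 • snd ℝ ℝ ℝ).prod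
    ((0.4 * (Z.2 * deriv f Z.1)) • fst ℝ ℝ ℝ + (0.4 * f Z.1 - μ) • snd ℝ ℝ ℝ)

lemma hasFDerivAt_F (r μ : ℝ) (Z : ℝ × ℝ) : HasFDerivAt (F r μ) (jacobianF r μ Z) Z := by
  have hX : HasFDerivAt (fun p : ℝ × ℝ => p.1) (fst ℝ ℝ ℝ) Z := hasFDerivAt_fst
  have hY : HasFDerivAt (fun p : ℝ × ℝ => p.2) (snd ℝ ℝ ℝ) Z := hasFDerivAt_snd
  have hf := (hasDerivAt_f Z.1).differentiableAt.hasDerivAt.comp_hasFDerivAt Z hX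
  have h1 := ((hX.const_mul r).sub ((hX.pow 2).const_mul 0.02)).sub (hY.mul hf)
  have h2 := ((hf.const_mul 0.4).sub_const μ).mul hY
  refine (h1.prodMk h2).congr_fderiv ?_
  ext <;> simp [jacobianF] <;> ring

lemma jacobianF_apply (r μ : ℝ) (Z p : ℝ × ℝ) :
    jacobianF r μ Z p = ((r - 0.04 * Z.1 - Z.2 * deriv f Z.1) * p.1 - f Z.1 * p.2,
      0.4 * (Z.2 * deriv f Z.1) * p.1 + (0.4 * f Z.1 - μ) * p.2) := by
  simp [jacobianF]

lemma f_ten_mul_sqrt {t : ℝ} (ht : 0 ≤ t) : f (10 * √t) = t / (1 + t) := by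
  unfold f
  rw [mul_pow, sq_sqrt ht]
  field_simp
  ring

lemma deriv_f_ten_mul_sqrt {t : ℝ} (ht : 0 ≤ t) : deriv f (10 * √t) = √t / (5 * (1 + t) ^ 2) := by
  rw [(hasDerivAt_f _).deriv, mul_pow, sq_sqrt ht]
  field_simp
  ring

noncomputable def coexistencePoint (r μ : ℝ) : ℝ × ℝ :=
  (10 * √(μ / (0.4 - μ)), (4 * r * √(0.4 - μ) - 0.8 * √μ) / ((0.4 - μ) * √μ))

section coexistence
variable {μ : ℝ} (hμ0 : 0 < μ) (hμ4 : μ < 0.4)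
include hμ0 hμ4

lemma f_coexistence : f (10 * √(μ / (0.4 - μ))) = μ / 0.4 := by
  have hb : 0 < 0.4 - μ := by linarith
  rw [f_ten_mul_sqrt (div_nonneg hμ0.le hb.le)]
  field_simp
  ring

lemma coexistence_snd_mul_deriv_f (r : ℝ) :
    (coexistencePoint r μ).2 * deriv f (coexistencePoint r μ).1
      = 5 * r * (0.4 - μ) - √(μ * (0.4 - μ)) := by
  have hb : 0 < 0.4 - μ := by linarith
  rw [coexistencePoint, deriv_f_ten_mul_sqrt (div_nonneg hμ0.le hb.le), sqrt_div hμ0.le,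
    sqrt_mul hμ0.le]
  have hα : 0 < √μ := sqrt_pos.mpr hμ0
  have hβ : 0 < √(0.4 - μ) := sqrt_pos.mpr hb
  field_simp
  linear_combination (0.8 * √μ) * sq_sqrt hb.le

end coexistence

theorem linearization_at_coexistence_general (r μ : ℝ) (hμ0 : 0 < μ) (hμ4 : μ < 0.4) :
    ∃ L : ℝ × ℝ →L[ℝ] ℝ × ℝ,
      HasFDerivAt (F r μ) L
        (10 * Real.sqrt (μ / (0.4 - μ)),
          (4 * r * Real.sqrt (0.4 - μ) - 0.8 * Real.sqrt μ) / ((0.4 - μ) * Real.sqrt μ)) ∧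
      ∀ p : ℝ × ℝ,
        L p = ((r - 0.4 * Real.sqrt (μ / (0.4 - μ)) - 5 * r * (0.4 - μ)
                  + Real.sqrt (μ * (0.4 - μ))) * p.1 + (-(μ / 0.4)) * p.2,
               (2 * r * (0.4 - μ) - 0.4 * Real.sqrt (μ * (0.4 - μ))) * p.1) := by
  refine ⟨jacobianF r μ (coexistencePoint r μ), hasFDerivAt_F r μ _, fun p => ?_⟩
  rw [jacobianF_apply, coexistence_snd_mul_deriv_f hμ0 hμ4]
  dsimp only [coexistencePoint]
  rw [f_coexistence hμ0 hμ4]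
  ext <;> ring

theorem linearization_at_coexistence (r μ : ℝ) (hr : r > 0) (hμ0 : 0 < μ) (hμ4 : μ < 0.4)
    (hcond : μ < 0.4 * r ^ 2 / (0.04 + r ^ 2)) :
    ∃ L : ℝ × ℝ →L[ℝ] ℝ × ℝ,
      HasFDerivAt (F r μ) L
        (10 * Real.sqrt (μ / (0.4 - μ)),
          (4 * r * Real.sqrt (0.4 - μ) - 0.8 * Real.sqrt μ) / ((0.4 - μ) * Real.sqrt μ)) ∧
      ∀ p : ℝ × ℝ,
        L p = ((r - 0.4 * Real.sqrt (μ / (0.4 - μ)) - 5 * r * (0.4 - μ)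
                  + Real.sqrt (μ * (0.4 - μ))) * p.1 + (-(μ / 0.4)) * p.2,
               (2 * r * (0.4 - μ) - 0.4 * Real.sqrt (μ * (0.4 - μ))) * p.1) :=
  linearization_at_coexistence_general r μ hμ0 hμ4
end

section
/- Let r > 0 and 0 < μ < 0.4. The determinant of the Jacobian matrix at the coexistence equilibrium, which equals μ·(5r(0.4−μ) − √(μ(0.4−μ))), is strictly positive if and only if μ < 0.4r²/(0.04 + r²). -/
theorem coexistence_jacobian_det (r μ : ℝ) (hr : r > 0) (hμ0 : 0 < μ) (hμ4 : μ < 0.4) :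
    Matrix.det
        (!![r - 0.4 * Real.sqrt (μ / (0.4 - μ)) - 5 * r * (0.4 - μ)
              + Real.sqrt (μ * (0.4 - μ)), -(μ / 0.4);
            2 * r * (0.4 - μ) - 0.4 * Real.sqrt (μ * (0.4 - μ)), 0] : Matrix (Fin 2) (Fin 2) ℝ)
      = μ * (5 * r * (0.4 - μ) - Real.sqrt (μ * (0.4 - μ)))
      ∧
    (0 < μ * (5 * r * (0.4 - μ) - Real.sqrt (μ * (0.4 - μ)))
      ↔ μ < 0.4 * r ^ 2 / (0.04 + r ^ 2)) := by
  have hd : (0:ℝ) < 0.4 - μ := by linarith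
  constructor
  · rw [Matrix.det_fin_two_of]; ring
  · have h5 : (0:ℝ) < 5 * r * (0.4 - μ) := by positivity
    rw [mul_pos_iff_of_pos_left hμ0, sub_pos, Real.sqrt_lt' h5,
      lt_div_iff₀ (by positivity : (0:ℝ) < 0.04 + r ^ 2)]
    constructor
    · intro h; nlinarith
    · intro h; nlinarith [sq_nonneg (0.4 - μ), mul_pos hd hd]
end
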